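/- arXiv:1605.04963 — 3 statements merged into one kernel-verified Lean document; each statement's English description precedes it below -/
import Mathlib

section
/- Define recursively γ_{n,j}(φ) for j ∈ {1,2} by γ_{0,j} = η_{0,j} and γ_{n,j}(φ) = γ_{n-1,j}(G_{n-1} · M_{n,j}(φ)), where c^{-1} < G_p < c. Suppose for all n and all bounded φ: ‖η_{n,1} - η_{n,2}‖_TV ≤ h (with η_{n,j} the normalization of γ_{n,j}). Then |γ_{n,1}(1) - γ_{n,2}(1)| ≤ C(n)·h for a constant C(n) depending only on n and c. -/
/-!
Let `η_{n,j} = γ_{n,j}[|univ]` be the normalized measures, so that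
`γ_{n+1,j}(1) = γ_{n,j}(G_n) = γ_{n,j}(1) η_{n,j}(G_n)`. Then
`γ_{n+1,1}(1) - γ_{n+1,2}(1)`
`  = γ_{n,1}(1) (η_{n,1}(G_n) - η_{n,2}(G_n)) + η_{n,2}(G_n) (γ_{n,1}(1) - γ_{n,2}(1))`.
By the layer-cake formula, `η(G_n) = ∫_0^c η{G_n > t} dt`, so the total-variation bound gives
`|η_{n,1}(G_n) - η_{n,2}(G_n)| ≤ c h`; with `γ_{n,1}(1) ≤ c^n` and `η_{n,2}(G_n) ≤ c`, induction
on `n` yields `|γ_{n,1}(1) - γ_{n,2}(1)| ≤ n c^n h`.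
-/

open MeasureTheory ProbabilityTheory
open Set

/-- The unnormalized Feynman–Kac measures: `γ_0 = η_0` and
`γ_{n+1}(dy) = ∫ G_n(x) γ_n(dx) M_{n+1}(x, dy)`. -/
noncomputable def gammaFK {U : Type*} [MeasurableSpace U] (η0 : Measure U)
    (G : ℕ → U → ℝ) (M : ℕ → Kernel U U) : ℕ → Measure U
  | 0 => η0
  | n + 1 => ((gammaFK η0 G M n).withDensity fun x => ENNReal.ofReal (G n x)).bind
      (M (n + 1))

section TotalVariation

variable {α : Type*} [MeasurableSpace α] {μ ν : Measure α} {f : α → ℝ} {c h : ℝ}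

lemma integrable_of_nonneg_of_le [IsFiniteMeasure μ] (hf : Measurable f) (hf0 : 0 ≤ f)
    (hfc : ∀ x, f x ≤ c) : Integrable f μ :=
  .of_bound hf.aestronglyMeasurable c <| .of_forall fun x => by
    rw [Real.norm_of_nonneg (hf0 x)]; exact hfc x

lemma integral_eq_integral_Ioc_measureReal_lt [IsFiniteMeasure μ] (hf : Measurable f)
    (hf0 : 0 ≤ f) (hfc : ∀ x, f x ≤ c) :
    ∫ x, f x ∂μ = ∫ t in Ioc 0 c, μ.real {x | t < f x} := by
  rw [(integrable_of_nonneg_of_le hf hf0 hfc).integral_eq_integral_meas_lt (.of_forall hf0)]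
  refine setIntegral_eq_of_subset_of_forall_sdiff_eq_zero measurableSet_Ioi
    Ioc_subset_Ioi_self fun t ⟨ht0, htc⟩ => ?_
  have hct : c < t := not_le.1 fun htc' => htc ⟨ht0, htc'⟩
  have hempty : {x | t < f x} = ∅ :=
    eq_empty_of_forall_notMem fun x hx => (hfc x).not_gt (hct.trans hx)
  rw [hempty, measureReal_empty]

lemma integrableOn_Ioc_measureReal_lt [IsFiniteMeasure μ] :
    IntegrableOn (fun t => μ.real {x | t < f x}) (Ioc 0 c) :=
  have hanti : Antitone fun t => μ.real {x | t < f x} := fun _ _ hst =>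
    measureReal_mono fun _ hx => hst.trans_lt hx
  (hanti.locallyIntegrable.integrableOn_isCompact isCompact_Icc).mono_set Ioc_subset_Icc_self

lemma abs_integral_sub_integral_le_of_abs_measureReal_sub_le [IsFiniteMeasure μ]
    [IsFiniteMeasure ν] (hf : Measurable f) (hf0 : 0 ≤ f) (hfc : ∀ x, f x ≤ c) (hc : 0 ≤ c)
    (hμν : ∀ s, MeasurableSet s → |μ.real s - ν.real s| ≤ h) :
    |∫ x, f x ∂μ - ∫ x, f x ∂ν| ≤ c * h := by
  rw [integral_eq_integral_Ioc_measureReal_lt hf hf0 hfc,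
    integral_eq_integral_Ioc_measureReal_lt hf hf0 hfc,
    ← integral_sub integrableOn_Ioc_measureReal_lt integrableOn_Ioc_measureReal_lt,
    ← Real.norm_eq_abs]
  calc _ ≤ h * volume.real (Ioc 0 c) :=
        norm_setIntegral_le_of_norm_le_const measure_Ioc_lt_top fun t _ =>
          hμν _ (hf measurableSet_Ioi)
    _ = c * h := by rw [Real.volume_real_Ioc_of_le hc, sub_zero, mul_comm]

end TotalVariation

section Normalization

variable {α : Type*} [MeasurableSpace α] {γ γ₁ γ₂ : Measure α} {f : α → ℝ} {c h : ℝ}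

lemma measureReal_cond_univ (s : Set α) : γ[|univ].real s = γ.real s / γ.real univ := by
  rw [measureReal_def, cond_apply MeasurableSet.univ, univ_inter, ENNReal.toReal_mul,
    ENNReal.toReal_inv, div_eq_inv_mul, measureReal_def, measureReal_def]

lemma integral_eq_measureReal_univ_mul_integral_cond_univ [IsFiniteMeasure γ]
    (hγ : γ univ ≠ 0) : ∫ x, f x ∂γ = γ.real univ * ∫ x, f x ∂γ[|univ] := by
  rw [ProbabilityTheory.cond, Measure.restrict_univ, integral_smul_measure, ENNReal.toReal_inv,
    smul_eq_mul, ← mul_assoc, ← measureReal_def,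
    mul_inv_cancel₀ ((measureReal_ne_zero_iff (measure_ne_top _ _)).2 hγ), one_mul]

lemma abs_integral_sub_integral_le [IsFiniteMeasure γ₁] [IsFiniteMeasure γ₂]
    (hγ₁ : γ₁ univ ≠ 0) (hγ₂ : γ₂ univ ≠ 0) (hf : Measurable f) (hf0 : 0 ≤ f)
    (hfc : ∀ x, f x ≤ c) (hc : 0 ≤ c)
    (hγ : ∀ s, MeasurableSet s → |γ₁.real s / γ₁.real univ - γ₂.real s / γ₂.real univ| ≤ h) :
    |∫ x, f x ∂γ₁ - ∫ x, f x ∂γ₂|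
      ≤ γ₁.real univ * (c * h) + c * |γ₁.real univ - γ₂.real univ| := by
  have := cond_isProbabilityMeasure_of_finite hγ₁ (measure_ne_top _ _)
  have := cond_isProbabilityMeasure_of_finite hγ₂ (measure_ne_top _ _)
  have hη : |∫ x, f x ∂γ₁[|univ] - ∫ x, f x ∂γ₂[|univ]| ≤ c * h :=
    abs_integral_sub_integral_le_of_abs_measureReal_sub_le hf hf0 hfc hc fun s hs => by
      simpa only [measureReal_cond_univ] using hγ s hs
  have hη₂0 : 0 ≤ ∫ x, f x ∂γ₂[|univ] := integral_nonneg hf0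
  have hη₂c : ∫ x, f x ∂γ₂[|univ] ≤ c :=
    (integral_mono (integrable_of_nonneg_of_le hf hf0 hfc) (integrable_const c) hfc).trans_eq
      (by simp)
  rw [integral_eq_measureReal_univ_mul_integral_cond_univ hγ₁,
    integral_eq_measureReal_univ_mul_integral_cond_univ hγ₂]
  set a₁ := γ₁.real univ
  set a₂ := γ₂.real univ
  set I₁ := ∫ x, f x ∂γ₁[|univ]
  set I₂ := ∫ x, f x ∂γ₂[|univ]
  calc |a₁ * I₁ - a₂ * I₂| = |a₁ * (I₁ - I₂) + I₂ * (a₁ - a₂)| := by congr 1; ring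
    _ ≤ a₁ * |I₁ - I₂| + I₂ * |a₁ - a₂| := by
      refine (abs_add_le _ _).trans_eq ?_
      rw [abs_mul, abs_mul, abs_of_nonneg measureReal_nonneg, abs_of_nonneg hη₂0]
    _ ≤ a₁ * (c * h) + c * |a₁ - a₂| := by gcongr

end Normalization

section FeynmanKac

variable {U : Type*} [MeasurableSpace U] {η₀ : Measure U} {G : ℕ → U → ℝ} {M : ℕ → Kernel U U}
  {c : ℝ}

lemma gammaFK_succ_apply_univ (n : ℕ) [IsMarkovKernel (M (n + 1))] :
    gammaFK η₀ G M (n + 1) univ = ∫⁻ x, ENNReal.ofReal (G n x) ∂gammaFK η₀ G M n := by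
  rw [gammaFK, Measure.bind_apply MeasurableSet.univ (M (n + 1)).measurable.aemeasurable]
  simp only [measure_univ, lintegral_one, withDensity_apply _ MeasurableSet.univ,
    Measure.restrict_univ]

lemma measureReal_gammaFK_succ_univ {n : ℕ} [IsMarkovKernel (M (n + 1))] (hG : Measurable (G n))
    (hG0 : ∀ x, 0 ≤ G n x) :
    (gammaFK η₀ G M (n + 1)).real univ = ∫ x, G n x ∂gammaFK η₀ G M n := by
  rw [measureReal_def, gammaFK_succ_apply_univ,
    integral_eq_lintegral_of_nonneg_ae (.of_forall hG0) hG.aestronglyMeasurable]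

variable [IsProbabilityMeasure η₀] [∀ p, IsMarkovKernel (M p)]

lemma gammaFK_apply_univ_le (hc : 0 ≤ c) (hGc : ∀ p x, G p x ≤ c) (n : ℕ) :
    gammaFK η₀ G M n univ ≤ ENNReal.ofReal (c ^ n) := by
  induction n with
  | zero => simp [gammaFK]
  | succ n ih =>
    rw [gammaFK_succ_apply_univ]
    calc ∫⁻ x, ENNReal.ofReal (G n x) ∂gammaFK η₀ G M n
        ≤ ∫⁻ _, ENNReal.ofReal c ∂gammaFK η₀ G M n :=
          lintegral_mono fun x => ENNReal.ofReal_le_ofReal (hGc n x)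
      _ = ENNReal.ofReal c * gammaFK η₀ G M n univ := lintegral_const _
      _ ≤ ENNReal.ofReal c * ENNReal.ofReal (c ^ n) := by gcongr
      _ = ENNReal.ofReal (c ^ (n + 1)) := by rw [← ENNReal.ofReal_mul hc, pow_succ']

lemma isFiniteMeasure_gammaFK (hc : 0 ≤ c) (hGc : ∀ p x, G p x ≤ c) (n : ℕ) :
    IsFiniteMeasure (gammaFK η₀ G M n) :=
  ⟨(gammaFK_apply_univ_le hc hGc n).trans_lt ENNReal.ofReal_lt_top⟩

lemma gammaFK_apply_univ_ne_zero (hG : ∀ p, Measurable (G p)) (hG0 : ∀ p x, 0 < G p x)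
    (n : ℕ) : gammaFK η₀ G M n univ ≠ 0 := by
  induction n with
  | zero => simp [gammaFK]
  | succ n ih =>
    rw [gammaFK_succ_apply_univ, Ne, lintegral_eq_zero_iff (hG n).ennreal_ofReal]
    intro hzero
    have : (ae (gammaFK η₀ G M n)).NeBot := ae_neBot.2 fun h0 => ih (by simp [h0])
    obtain ⟨x, hx⟩ := hzero.exists
    exact (ENNReal.ofReal_pos.2 (hG0 n x)).ne' hx

theorem abs_measureReal_gammaFK_univ_sub_le {η₁ : Measure U} [IsProbabilityMeasure η₁]
    {M₁ : ℕ → Kernel U U} [∀ p, IsMarkovKernel (M₁ p)] {h : ℝ} (hc : 0 ≤ c) (hh : 0 ≤ h)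
    (hG : ∀ p, Measurable (G p)) (hG0 : ∀ p x, 0 < G p x) (hGc : ∀ p x, G p x ≤ c)
    (hη : ∀ m s, MeasurableSet s →
      |(gammaFK η₀ G M m).real s / (gammaFK η₀ G M m).real univ -
        (gammaFK η₁ G M₁ m).real s / (gammaFK η₁ G M₁ m).real univ| ≤ h) (n : ℕ) :
    |(gammaFK η₀ G M n).real univ - (gammaFK η₁ G M₁ n).real univ| ≤ n * c ^ n * h := by
  induction n with
  | zero => simp [gammaFK]
  | succ n ih =>
    have := isFiniteMeasure_gammaFK (η₀ := η₀) (M := M) hc hGc n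
    have := isFiniteMeasure_gammaFK (η₀ := η₁) (M := M₁) hc hGc n
    have hmass : (gammaFK η₀ G M n).real univ ≤ c ^ n :=
      ENNReal.toReal_le_of_le_ofReal (pow_nonneg hc n) (gammaFK_apply_univ_le hc hGc n)
    rw [measureReal_gammaFK_succ_univ (hG n) fun x => (hG0 n x).le,
      measureReal_gammaFK_succ_univ (hG n) fun x => (hG0 n x).le]
    calc _ ≤ (gammaFK η₀ G M n).real univ * (c * h)
          + c * |(gammaFK η₀ G M n).real univ - (gammaFK η₁ G M₁ n).real univ| :=
          abs_integral_sub_integral_le (gammaFK_apply_univ_ne_zero hG hG0 n)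
            (gammaFK_apply_univ_ne_zero hG hG0 n) (hG n) (fun x => (hG0 n x).le) (hGc n) hc
            (hη n)
      _ ≤ c ^ n * (c * h) + c * (n * c ^ n * h) := by gcongr
      _ = (n + 1 : ℕ) * c ^ (n + 1) * h := by push_cast; ring

end FeynmanKac

/-- Proposition A.4: if the normalized Feynman–Kac measures at two discretization
levels are within `h` in total variation at every time, and `c⁻¹ < G_p < c`, then the
normalizing constants satisfy `|γ_{n,1}(1) - γ_{n,2}(1)| ≤ C(n) h`, for a constant
`C(n)` depending only on `n` and `c`. -/
theorem stmt14 (n : ℕ) (c : ℝ) (hc : 1 < c) :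
    ∃ C : ℝ, ∀ (U : Type) (_ : MeasurableSpace U)
      (η0 : Fin 2 → Measure U) (_ : ∀ j, IsProbabilityMeasure (η0 j))
      (G : ℕ → U → ℝ) (_ : ∀ p, Measurable (G p))
      (_ : ∀ p x, c⁻¹ < G p x ∧ G p x < c)
      (M : ℕ → Fin 2 → Kernel U U) (_ : ∀ p j, IsMarkovKernel (M p j))
      (h : ℝ) (_ : 0 ≤ h)
      (_ : ∀ (m : ℕ) (A : Set U), MeasurableSet A →
        |((gammaFK (η0 0) G (fun p => M p 0) m A).toReal /
            (gammaFK (η0 0) G (fun p => M p 0) m Set.univ).toReal) -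
          ((gammaFK (η0 1) G (fun p => M p 1) m A).toReal /
            (gammaFK (η0 1) G (fun p => M p 1) m Set.univ).toReal)| ≤ h),
      |(gammaFK (η0 0) G (fun p => M p 0) n Set.univ).toReal -
        (gammaFK (η0 1) G (fun p => M p 1) n Set.univ).toReal| ≤ C * h := by
  refine ⟨n * c ^ n, fun U _ η0 hη0 G hG hGc M hM h hh hη => ?_⟩
  have hc0 : 0 < c := zero_lt_one.trans hc
  have := hη0 0
  have := hη0 1
  have : ∀ p, IsMarkovKernel (M p 0) := fun p => hM p 0
  have : ∀ p, IsMarkovKernel (M p 1) := fun p => hM p 1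
  exact abs_measureReal_gammaFK_univ_sub_le hc0.le hh hG
    (fun p x => (inv_pos.2 hc0).trans (hGc p x).1) (fun p x => (hGc p x).2.le) hη n
end

section
/- Suppose for levels l = 0,...,L the variance of the level-l increment is V_l/N_l with V_l = v·2^{-βl}, the per-sample cost is C_l = c·2^{γl}, and β = γ. Then the choice N_l = N_0·2^{-(β+γ)l/2} minimizing total cost Σ_l C_l N_l subject to total variance Σ_l V_l/N_l ≤ ε² gives total variance (v/N_0)·(L+1) and total cost c·N_0·(L+1); in particular with N_0 = v(L+1)/ε², the total cost is c·v·(L+1)²/ε². -/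
open Finset

/-!
With `N_l = N_0 2^{-(β+γ)l/2}`, both the level variance `V_l / N_l` and the level cost
`C_l N_l` are `2^{(γ-β)l/2}` times a constant. When `β = γ` every level therefore
contributes the same amount, and each sum over `l = 0, …, L` is `L + 1` copies of it.
-/

lemma div_geometric_samples (v N0 β γ x : ℝ) :
    v * (2 : ℝ) ^ (-(β * x)) / (N0 * (2 : ℝ) ^ (-((β + γ) * x) / 2)) =
      v / N0 * (2 : ℝ) ^ ((γ - β) * x / 2) := by
  rw [mul_div_mul_comm, ← Real.rpow_sub two_pos]
  ring_nf

lemma mul_geometric_samples (c N0 β γ x : ℝ) :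
    c * (2 : ℝ) ^ (γ * x) * (N0 * (2 : ℝ) ^ (-((β + γ) * x) / 2)) =
      c * N0 * (2 : ℝ) ^ ((γ - β) * x / 2) := by
  rw [mul_mul_mul_comm, ← Real.rpow_add two_pos]
  ring_nf

theorem stmt15_general (v c N0 ε : ℝ)
    (β γ : ℝ) (hβγ : β = γ) (L : ℕ)
    (V C N : ℕ → ℝ)
    (hV : ∀ l, V l = v * (2 : ℝ) ^ (-(β * l)))
    (hC : ∀ l, C l = c * (2 : ℝ) ^ (γ * l))
    (hNl : ∀ l, N l = N0 * (2 : ℝ) ^ (-((β + γ) * l) / 2)) :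
    (∑ l ∈ range (L + 1), V l / N l) = (v / N0) * (L + 1) ∧
    (∑ l ∈ range (L + 1), C l * N l) = c * N0 * (L + 1) ∧
    (N0 = v * (L + 1) / ε ^ 2 →
      (∑ l ∈ range (L + 1), C l * N l) = c * v * (L + 1) ^ 2 / ε ^ 2) := by
  subst hβγ
  have hvar : ∀ l, V l / N l = v / N0 := fun l => by
    rw [hV, hNl, div_geometric_samples, sub_self, zero_mul, zero_div, Real.rpow_zero, mul_one]
  have hcost : ∀ l, C l * N l = c * N0 := fun l => by
    rw [hC, hNl, mul_geometric_samples, sub_self, zero_mul, zero_div, Real.rpow_zero, mul_one]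
  simp only [hvar, hcost, sum_const, card_range, nsmul_eq_mul]
  push_cast
  exact ⟨by ring, by ring, fun hN0eq => by rw [hN0eq]; ring⟩

/-- MLMC cost calculation in the boundary case `β = γ`: with `V_l = v 2^{-βl}`,
`C_l = c 2^{γl}` and `N_l = N_0 2^{-(β+γ)l/2}`, the total variance is
`(v/N_0)(L+1)`, the total cost is `c N_0 (L+1)`, and choosing
`N_0 = v(L+1)/ε²` gives total cost `c v (L+1)²/ε²`. -/
theorem stmt15 (v c N0 ε : ℝ) (hv : 0 < v) (hcp : 0 < c) (hN0 : 0 < N0) (hε : 0 < ε)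
    (β γ : ℝ) (hβγ : β = γ) (L : ℕ)
    (V C N : ℕ → ℝ)
    (hV : ∀ l, V l = v * (2 : ℝ) ^ (-(β * l)))
    (hC : ∀ l, C l = c * (2 : ℝ) ^ (γ * l))
    (hNl : ∀ l, N l = N0 * (2 : ℝ) ^ (-((β + γ) * l) / 2)) :
    (∑ l ∈ range (L + 1), V l / N l) = (v / N0) * (L + 1) ∧
    (∑ l ∈ range (L + 1), C l * N l) = c * N0 * (L + 1) ∧
    (N0 = v * (L + 1) / ε ^ 2 →
      (∑ l ∈ range (L + 1), C l * N l) = c * v * (L + 1) ^ 2 / ε ^ 2) :=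
  stmt15_general v c N0 ε β γ hβγ L V C N hV hC hNl
end

section
/- Let L = ⌈log₂(1/ε)⌉ and set N_l = ⌈C·ε^{-2}·2^{-3l/4}·K_L⌉ with K_L = Σ_{l=0}^{L} 2^{l/4}. If the level-l variance contribution is bounded by B·2^{-l/2}/N_l and per-time-step cost of level l is 2^l·N_l, then the total variance Σ_{l=0}^{L} B·2^{-l/2}/N_l is O(ε²) and the total cost Σ_{l=0}^{L} 2^l N_l is O(ε^{-5/2}). -/
open Finset

/-! The sample sizes are chosen so that `B 2^{-l/2} / N_l ≤ (B / (C K_L)) ε² 2^{l/4}` and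
`2^l N_l ≤ C ε⁻² K_L 2^{l/4} + 2^l`; summing over the levels turns the sums of `2^{l/4}` back
into `K_L`, so the variance is at most `(B / C) ε²` and the cost at most `C ε⁻² K_L² + 2^{L+1}`.
The choice of `L` gives `2^{L+1} ≤ 4 / ε`, and `K_L` is a geometric sum of ratio `2^{1/4}`,
so `K_L² ≲ 2^{(L+1)/2} ≲ ε^{-1/2}` and the cost is `O(ε^{-5/2})`. -/

theorem sum_range_rpow_div_le {b q : ℝ} (hb : 1 < b) (hq : 0 < q) (n : ℕ) :
    ∑ k ∈ range n, b ^ ((k : ℝ) / q) ≤ b ^ ((n : ℝ) / q) / (b ^ (1 / q) - 1) := by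
  have hr : 1 < b ^ (1 / q) := Real.one_lt_rpow hb (by positivity)
  have hpow : ∀ m : ℕ, b ^ ((m : ℝ) / q) = (b ^ (1 / q)) ^ m := fun m => by
    rw [← Real.rpow_mul_natCast (by positivity)]
    ring_nf
  simp_rw [hpow]
  rw [geom_sum_eq hr.ne']
  exact div_le_div_of_nonneg_right (by linarith) (sub_pos.2 hr).le

theorem two_pow_toNat_ceil_logb_lt {x : ℝ} (hx : 1 ≤ x) :
    (2 : ℝ) ^ ⌈Real.logb 2 x⌉.toNat < 2 * x := by
  have hlog : 0 ≤ Real.logb 2 x := Real.logb_nonneg one_lt_two hx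
  have hn : ((⌈Real.logb 2 x⌉.toNat : ℕ) : ℝ) < Real.logb 2 x + 1 := by
    rw [show ((⌈Real.logb 2 x⌉.toNat : ℕ) : ℝ) = ((⌈Real.logb 2 x⌉ : ℤ) : ℝ) by
      exact_mod_cast Int.toNat_of_nonneg (Int.ceil_nonneg hlog)]
    exact Int.ceil_lt_add_one _
  calc (2 : ℝ) ^ ⌈Real.logb 2 x⌉.toNat = 2 ^ ((⌈Real.logb 2 x⌉.toNat : ℕ) : ℝ) :=
        (Real.rpow_natCast 2 _).symm
    _ < 2 ^ (Real.logb 2 x + 1) := Real.rpow_lt_rpow_of_exponent_lt one_lt_two hn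
    _ = 2 * x := by
      rw [Real.rpow_add two_pos, Real.rpow_logb two_pos (by norm_num) (by linarith),
        Real.rpow_one, mul_comm]

theorem sq_sum_range_two_rpow_div_four_le {ε : ℝ} (hε : 0 < ε) {n : ℕ}
    (hn : (2 : ℝ) ^ n ≤ 4 / ε) :
    (∑ k ∈ range n, (2 : ℝ) ^ ((k : ℝ) / 4)) ^ 2
      ≤ 2 * ε ^ (-(1 : ℝ) / 2) / ((2 : ℝ) ^ ((1 : ℝ) / 4) - 1) ^ 2 := by
  have hK := sum_range_rpow_div_le one_lt_two (by norm_num : (0 : ℝ) < 4) n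
  have hK0 : 0 ≤ ∑ k ∈ range n, (2 : ℝ) ^ ((k : ℝ) / 4) := by positivity
  have htop : ((2 : ℝ) ^ ((n : ℝ) / 4)) ^ 2 ≤ 2 * ε ^ (-(1 : ℝ) / 2) :=
    calc ((2 : ℝ) ^ ((n : ℝ) / 4)) ^ 2 = ((2 : ℝ) ^ n) ^ (1 / (2 : ℝ)) := by
          rw [← Real.rpow_mul_natCast two_pos.le, ← Real.rpow_natCast,
            ← Real.rpow_mul two_pos.le]
          ring_nf
      _ ≤ (4 / ε) ^ (1 / (2 : ℝ)) := by gcongr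
      _ = 2 * ε ^ (-(1 : ℝ) / 2) := by
          rw [Real.div_rpow (by norm_num) hε.le, div_eq_mul_inv, ← Real.rpow_neg hε.le,
            show (4 : ℝ) = 2 ^ (2 : ℝ) by norm_num, ← Real.rpow_mul two_pos.le]
          norm_num
  calc (∑ k ∈ range n, (2 : ℝ) ^ ((k : ℝ) / 4)) ^ 2
      ≤ ((2 : ℝ) ^ ((n : ℝ) / 4) / ((2 : ℝ) ^ ((1 : ℝ) / 4) - 1)) ^ 2 := by gcongr
    _ ≤ 2 * ε ^ (-(1 : ℝ) / 2) / ((2 : ℝ) ^ ((1 : ℝ) / 4) - 1) ^ 2 := by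
        rw [div_pow]; gcongr

theorem mlpf_variance_term_le {B C K ε : ℝ} (hB : 0 ≤ B) (hC : 0 < C) (hK : 0 < K)
    (hε : 0 < ε) (l : ℕ) :
    B * (2 : ℝ) ^ (-(l : ℝ) / 2) / (⌈C * ε⁻¹ ^ 2 * (2 : ℝ) ^ (-(3 * (l : ℝ)) / 4) * K⌉₊ : ℝ)
      ≤ B / (C * K) * ε ^ 2 * (2 : ℝ) ^ ((l : ℝ) / 4) := by
  have hsplit : (2 : ℝ) ^ (-(l : ℝ) / 2) = 2 ^ ((l : ℝ) / 4) * 2 ^ (-(3 * (l : ℝ)) / 4) := by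
    rw [← Real.rpow_add two_pos]; ring_nf
  have hpos : 0 < C * ε⁻¹ ^ 2 * (2 : ℝ) ^ (-(3 * (l : ℝ)) / 4) * K := by positivity
  calc B * (2 : ℝ) ^ (-(l : ℝ) / 2) / (⌈C * ε⁻¹ ^ 2 * (2 : ℝ) ^ (-(3 * (l : ℝ)) / 4) * K⌉₊ : ℝ)
      ≤ B * (2 : ℝ) ^ (-(l : ℝ) / 2) / (C * ε⁻¹ ^ 2 * (2 : ℝ) ^ (-(3 * (l : ℝ)) / 4) * K) :=
        div_le_div_of_nonneg_left (by positivity) hpos (Nat.le_ceil _)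
    _ = B / (C * K) * ε ^ 2 * (2 : ℝ) ^ ((l : ℝ) / 4) := by
        rw [hsplit]
        field_simp

theorem mlpf_sum_variance_le {B C ε : ℝ} (hB : 0 ≤ B) (hC : 0 < C) (hε : 0 < ε) (n : ℕ) :
    ∑ l ∈ range n, B * (2 : ℝ) ^ (-(l : ℝ) / 2) /
        (⌈C * ε⁻¹ ^ 2 * (2 : ℝ) ^ (-(3 * (l : ℝ)) / 4) *
          ∑ k ∈ range n, (2 : ℝ) ^ ((k : ℝ) / 4)⌉₊ : ℝ)
      ≤ B / C * ε ^ 2 := by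
  rcases Nat.eq_zero_or_pos n with rfl | hn
  · simp only [range_zero, sum_empty]; positivity
  set K := ∑ k ∈ range n, (2 : ℝ) ^ ((k : ℝ) / 4)
  have hK : 0 < K := sum_pos (fun _ _ => by positivity) (nonempty_range_iff.2 hn.ne')
  calc _ ≤ ∑ l ∈ range n, B / (C * K) * ε ^ 2 * (2 : ℝ) ^ ((l : ℝ) / 4) :=
        sum_le_sum fun l _ => mlpf_variance_term_le hB hC hK hε l
    _ = B / C * ε ^ 2 := by
        rw [← mul_sum]
        field_simp
        rfl

theorem mlpf_cost_term_le {C K : ℝ} (hC : 0 ≤ C) (hK : 0 ≤ K) (ε : ℝ) (l : ℕ) :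
    (2 : ℝ) ^ l * (⌈C * ε⁻¹ ^ 2 * (2 : ℝ) ^ (-(3 * (l : ℝ)) / 4) * K⌉₊ : ℝ)
      ≤ C * ε⁻¹ ^ 2 * K * (2 : ℝ) ^ ((l : ℝ) / 4) + 2 ^ l := by
  have hmerge : (2 : ℝ) ^ l * 2 ^ (-(3 * (l : ℝ)) / 4) = 2 ^ ((l : ℝ) / 4) := by
    rw [← Real.rpow_natCast, ← Real.rpow_add two_pos]; ring_nf
  calc (2 : ℝ) ^ l * (⌈C * ε⁻¹ ^ 2 * (2 : ℝ) ^ (-(3 * (l : ℝ)) / 4) * K⌉₊ : ℝ)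
      ≤ 2 ^ l * (C * ε⁻¹ ^ 2 * (2 : ℝ) ^ (-(3 * (l : ℝ)) / 4) * K + 1) := by
        gcongr
        exact (Nat.ceil_lt_add_one (by positivity)).le
    _ = C * ε⁻¹ ^ 2 * K * (2 : ℝ) ^ ((l : ℝ) / 4) + 2 ^ l := by
        rw [← hmerge]; ring

theorem mlpf_sum_cost_le {C : ℝ} (hC : 0 ≤ C) (ε : ℝ) (n : ℕ) :
    ∑ l ∈ range n, (2 : ℝ) ^ l *
        (⌈C * ε⁻¹ ^ 2 * (2 : ℝ) ^ (-(3 * (l : ℝ)) / 4) *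
          ∑ k ∈ range n, (2 : ℝ) ^ ((k : ℝ) / 4)⌉₊ : ℝ)
      ≤ C * ε⁻¹ ^ 2 * (∑ k ∈ range n, (2 : ℝ) ^ ((k : ℝ) / 4)) ^ 2 + 2 ^ n := by
  set K := ∑ k ∈ range n, (2 : ℝ) ^ ((k : ℝ) / 4)
  have hK : 0 ≤ K := by positivity
  have hgeom : ∑ l ∈ range n, (2 : ℝ) ^ l ≤ 2 ^ n := by
    rw [geom_sum_eq (by norm_num : (2 : ℝ) ≠ 1)]; linarith
  calc _ ≤ ∑ l ∈ range n, (C * ε⁻¹ ^ 2 * K * (2 : ℝ) ^ ((l : ℝ) / 4) + 2 ^ l) :=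
        sum_le_sum fun l _ => mlpf_cost_term_le hC hK ε l
    _ ≤ C * ε⁻¹ ^ 2 * K ^ 2 + 2 ^ n := by
        rw [sum_add_distrib, ← mul_sum, sq, ← mul_assoc]
        linarith

theorem mlpf_sum_cost_le_rpow {C ε : ℝ} (hC : 0 ≤ C) (hε : 0 < ε) (hε1 : ε ≤ 1) {n : ℕ}
    (hn : (2 : ℝ) ^ n ≤ 4 / ε) :
    ∑ l ∈ range n, (2 : ℝ) ^ l *
        (⌈C * ε⁻¹ ^ 2 * (2 : ℝ) ^ (-(3 * (l : ℝ)) / 4) *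
          ∑ k ∈ range n, (2 : ℝ) ^ ((k : ℝ) / 4)⌉₊ : ℝ)
      ≤ (2 * C / ((2 : ℝ) ^ ((1 : ℝ) / 4) - 1) ^ 2 + 4) * ε ^ (-(5 : ℝ) / 2) := by
  have hexp : ε⁻¹ ^ 2 * ε ^ (-(1 : ℝ) / 2) = ε ^ (-(5 : ℝ) / 2) := by
    rw [← Real.rpow_natCast, ← Real.rpow_neg_one, ← Real.rpow_mul hε.le,
      ← Real.rpow_add hε]
    norm_num
  have hinv : 4 / ε ≤ 4 * ε ^ (-(5 : ℝ) / 2) := by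
    rw [div_eq_mul_inv, ← Real.rpow_neg_one]
    exact mul_le_mul_of_nonneg_left (Real.rpow_le_rpow_of_exponent_ge hε hε1 (by norm_num))
      (by norm_num)
  calc _ ≤ C * ε⁻¹ ^ 2 * (∑ k ∈ range n, (2 : ℝ) ^ ((k : ℝ) / 4)) ^ 2 + 2 ^ n :=
        mlpf_sum_cost_le hC ε n
    _ ≤ C * ε⁻¹ ^ 2 * (2 * ε ^ (-(1 : ℝ) / 2) / ((2 : ℝ) ^ ((1 : ℝ) / 4) - 1) ^ 2)
          + 4 * ε ^ (-(5 : ℝ) / 2) := by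
        gcongr
        · exact sq_sum_range_two_rpow_div_four_le hε hn
        · exact hn.trans hinv
    _ = _ := by rw [← hexp]; ring

/-- MLPF cost analysis: with `L = ⌈log₂(1/ε)⌉`, `K_L = Σ_{l≤L} 2^{l/4}` and
`N_l = ⌈C ε⁻² 2^{-3l/4} K_L⌉`, if the level-`l` variance contribution is bounded by
`B 2^{-l/2}/N_l` and the cost of level `l` is `2^l N_l`, then the total variance is
`O(ε²)` and the total cost is `O(ε^{-5/2})`. -/
theorem stmt16 (C B : ℝ) (hC : 0 < C) (hB : 0 < B) :
    ∃ D : ℝ, 0 < D ∧ ∀ ε : ℝ, 0 < ε → ε < 1 →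
      (∑ l ∈ range ((⌈Real.logb 2 (1 / ε)⌉.toNat) + 1),
          B * (2 : ℝ) ^ (-(l : ℝ) / 2) /
            (⌈C * ε⁻¹ ^ (2 : ℕ) * (2 : ℝ) ^ (-(3 * (l : ℝ)) / 4) *
              (∑ k ∈ range ((⌈Real.logb 2 (1 / ε)⌉.toNat) + 1),
                (2 : ℝ) ^ ((k : ℝ) / 4))⌉₊ : ℝ))
        ≤ D * ε ^ 2 ∧
      (∑ l ∈ range ((⌈Real.logb 2 (1 / ε)⌉.toNat) + 1),
          (2 : ℝ) ^ l *
            (⌈C * ε⁻¹ ^ (2 : ℕ) * (2 : ℝ) ^ (-(3 * (l : ℝ)) / 4) *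
              (∑ k ∈ range ((⌈Real.logb 2 (1 / ε)⌉.toNat) + 1),
                (2 : ℝ) ^ ((k : ℝ) / 4))⌉₊ : ℝ))
        ≤ D * ε ^ (-(5 : ℝ) / 2) := by
  set c := 2 * C / ((2 : ℝ) ^ ((1 : ℝ) / 4) - 1) ^ 2
  have hc : 0 ≤ c := by positivity
  refine ⟨B / C + c + 4, by positivity, fun ε hε hε1 => ⟨?_, ?_⟩⟩
  · calc _ ≤ B / C * ε ^ 2 := mlpf_sum_variance_le hB.le hC hε _
      _ ≤ (B / C + c + 4) * ε ^ 2 := by gcongr; linarith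
  · have hn : (2 : ℝ) ^ (⌈Real.logb 2 (1 / ε)⌉.toNat + 1) ≤ 4 / ε := by
      have := two_pow_toNat_ceil_logb_lt (one_le_one_div hε hε1.le)
      rw [pow_succ, show 4 / ε = 2 * (1 / ε) * 2 by ring]
      gcongr
    calc _ ≤ (c + 4) * ε ^ (-(5 : ℝ) / 2) := mlpf_sum_cost_le_rpow hC.le hε hε1.le hn
      _ ≤ (B / C + c + 4) * ε ^ (-(5 : ℝ) / 2) := by gcongr; linarith [div_pos hB hC]
end
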